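/- arXiv:0708.3980 — 3 statements merged into one kernel-verified Lean document; each statement's English description precedes it below -/
import Mathlib

section
/- Let n m : ℕ with n, m ≥ 1, and let H : Matrix (Fin n × Fin m) (Fin n × Fin m) ℂ be Hermitian. Then the following are equivalent: (i) there exist positive semidefinite matrices H₁ H₂ : Matrix (Fin n × Fin m) (Fin n × Fin m) ℂ such that H = H₁ + Γ(H₂); (ii) for every ρ : Matrix (Fin n × Fin m) (Fin n × Fin m) ℂ such that ρ is positive semidefinite, ρ has trace 1, and Γ(ρ) is positive semidefinite, the trace Tr(ρ * H) is a real number and 0 ≤ (Tr(ρ * H)).re. -/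
open Matrix ComplexOrder

/-- Partial transpose with respect to the second tensor factor. -/
def partialTranspose {n m : ℕ} (X : Matrix (Fin n × Fin m) (Fin n × Fin m) ℂ) :
    Matrix (Fin n × Fin m) (Fin n × Fin m) ℂ :=
  fun p q => X (p.1, q.2) (q.1, p.2)

/-!
The matrices H₁ + Γ(H₂) with H₁, H₂ positive semidefinite form a convex cone K, and it is
closed: a bound on the trace of A + Γ(B) bounds the traces, hence all entries, of A and B, so
near any point K is the continuous image of a compact set. Each PPT state pairs nonnegatively
with K since Tr(ρ Γ(B)) = Tr(Γ(ρ) B). Conversely, if H ∉ K, Hahn–Banach separation gives a real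
functional X ↦ Re Tr(Y X), nonnegative on K and negative at H. Testing it on rank-one projectors
and their partial transposes shows that Y + Yᴴ and Γ(Y + Yᴴ) are positive semidefinite, and since
H is Hermitian, Re Tr((Y + Yᴴ) H) = 2 Re Tr(Y H) < 0; normalising Y + Yᴴ gives a PPT state
violating (ii).
-/

namespace Matrix

section General

variable {ι 𝕜 : Type*} [RCLike 𝕜]

theorem trace_mul_vecMulVec_star {R : Type*} [Fintype ι] [CommRing R] [StarRing R]
    (A : Matrix ι ι R) (x : ι → R) :
    (A * vecMulVec x (star x)).trace = star x ⬝ᵥ (A *ᵥ x) := by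
  rw [mul_vecMulVec, trace_vecMulVec, dotProduct_comm]

theorem PosSemidef.norm_apply_sq_le {A : Matrix ι ι 𝕜} (hA : A.PosSemidef) (i j : ι) :
    ‖A i j‖ ^ 2 ≤ RCLike.re (A i i) * RCLike.re (A j j) := by
  classical
  have hdet := RCLike.nonneg_iff.mp (hA.submatrix ![i, j]).det_nonneg
  have hii := RCLike.nonneg_iff.mp (hA.diag_nonneg (i := i))
  have hjj := RCLike.nonneg_iff.mp (hA.diag_nonneg (i := j))
  simp only [det_fin_two, submatrix_apply, cons_val_zero, cons_val_one] at hdet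
  rw [← hA.1.apply i j] at hdet ⊢
  simp only [map_sub, RCLike.mul_re, hii.2, hjj.2, RCLike.star_def, RCLike.conj_re,
    RCLike.conj_im] at hdet
  rw [norm_star, RCLike.norm_sq_eq_def]
  linarith [hdet.1]

variable [Fintype ι]

theorem PosSemidef.re_trace_nonneg {A : Matrix ι ι 𝕜} (hA : A.PosSemidef) :
    0 ≤ RCLike.re A.trace :=
  (RCLike.nonneg_iff.mp hA.trace_nonneg).1

theorem PosSemidef.re_apply_le_re_trace {A : Matrix ι ι 𝕜} (hA : A.PosSemidef) (i : ι) :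
    RCLike.re (A i i) ≤ RCLike.re A.trace := by
  rw [trace, map_sum]
  exact Finset.single_le_sum (f := fun k => RCLike.re (A k k))
    (fun k _ => (RCLike.nonneg_iff.mp hA.diag_nonneg).1) (Finset.mem_univ i)

theorem PosSemidef.norm_apply_le_re_trace {A : Matrix ι ι 𝕜} (hA : A.PosSemidef) (i j : ι) :
    ‖A i j‖ ≤ RCLike.re A.trace := by
  have hi := hA.re_apply_le_re_trace i
  have hj := hA.re_apply_le_re_trace j
  have hii := (RCLike.nonneg_iff.mp (hA.diag_nonneg (i := i))).1
  have hjj := (RCLike.nonneg_iff.mp (hA.diag_nonneg (i := j))).1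
  nlinarith [hA.norm_apply_sq_le i j, norm_nonneg (A i j)]

theorem PosSemidef.trace_mul_nonneg {A B : Matrix ι ι 𝕜} (hA : A.PosSemidef)
    (hB : B.PosSemidef) : 0 ≤ (A * B).trace := by
  obtain ⟨k, v, rfl⟩ := posSemidef_iff_eq_sum_vecMulVec.mp hB
  rw [Finset.mul_sum, trace_sum]
  exact Finset.sum_nonneg fun i _ => (trace_mul_vecMulVec_star A (v i)).symm ▸
    hA.dotProduct_mulVec_nonneg (v i)

theorem IsHermitian.posSemidef_of_re_trace_mul_nonneg {Z : Matrix ι ι 𝕜} (hZ : Z.IsHermitian)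
    (h : ∀ A : Matrix ι ι 𝕜, A.PosSemidef → 0 ≤ RCLike.re (Z * A).trace) : Z.PosSemidef := by
  refine posSemidef_iff_dotProduct_mulVec.mpr ⟨hZ, fun x => RCLike.nonneg_iff.mpr ⟨?_, ?_⟩⟩
  · simpa [trace_mul_vecMulVec_star] using h _ (posSemidef_vecMulVec_self_star x)
  · exact hZ.im_star_dotProduct_mulVec_self x

theorem re_trace_add_conjTranspose_mul {Y M : Matrix ι ι 𝕜} (hM : M.IsHermitian) :
    RCLike.re ((Y + Yᴴ) * M).trace = 2 * RCLike.re (Y * M).trace := by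
  have : (Yᴴ * M).trace = star (Y * M).trace := by
    rw [← trace_conjTranspose, conjTranspose_mul, hM.eq, trace_mul_comm]
  rw [add_mul, trace_add, map_add, this, RCLike.star_def, RCLike.conj_re, two_mul]

theorem exists_re_trace_mul_eq [DecidableEq ι] (f : Module.Dual ℝ (Matrix ι ι 𝕜)) :
    ∃ Y : Matrix ι ι 𝕜, ∀ X, f X = RCLike.re (Y * X).trace := by
  set g : Module.Dual 𝕜 (Matrix ι ι 𝕜) := f.extendRCLike
  refine ⟨of fun j i => g (single i j 1), fun X => ?_⟩
  rw [← Module.Dual.re_extendRCLike_apply (𝕜 := 𝕜) f X]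
  congr 1
  conv_lhs => rw [matrix_eq_sum_single X]
  simp only [map_sum, trace, diag, mul_apply, of_apply]
  rw [Finset.sum_comm]
  refine Finset.sum_congr rfl fun i _ => Finset.sum_congr rfl fun j _ => ?_
  have hsingle : single j i (X j i) = X j i • single j i (1 : 𝕜) := by
    rw [smul_single, smul_eq_mul, mul_one]
  rw [hsingle, map_smul, smul_eq_mul, mul_comm]

theorem isClosed_setOf_posSemidef : IsClosed {A : Matrix ι ι 𝕜 | A.PosSemidef} := by
  simp only [posSemidef_iff_dotProduct_mulVec, Set.ofPred_and, Set.ofPred_forall]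
  exact (isClosed_eq continuous_id.matrix_conjTranspose continuous_id).inter <|
    isClosed_iInter fun x => isClosed_le continuous_const <|
      continuous_const.dotProduct (continuous_id.matrix_mulVec continuous_const)

theorem isCompact_setOf_posSemidef_re_trace_le (R : ℝ) :
    IsCompact {A : Matrix ι ι 𝕜 | A.PosSemidef ∧ RCLike.re A.trace ≤ R} := by
  refine (isCompact_univ_pi fun _ => isCompact_univ_pi fun _ =>
    isCompact_closedBall (0 : 𝕜) R).of_isClosed_subset
    (isClosed_setOf_posSemidef.inter (isClosed_le (RCLike.continuous_re.comp
      continuous_id.matrix_trace) continuous_const)) ?_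
  rintro A ⟨hA, hR⟩ i - j -
  exact mem_closedBall_zero_iff.mpr ((hA.norm_apply_le_re_trace i j).trans hR)

instance : LocallyConvexSpace ℝ (Matrix ι ι 𝕜) :=
  inferInstanceAs (LocallyConvexSpace ℝ (ι → ι → 𝕜))

end General

end Matrix

section PartialTranspose

variable {n m : ℕ}

local notation "Γ" => partialTranspose

@[simp]
theorem partialTranspose_zero : Γ (0 : Matrix (Fin n × Fin m) (Fin n × Fin m) ℂ) = 0 := rfl

theorem partialTranspose_add (X Y : Matrix (Fin n × Fin m) (Fin n × Fin m) ℂ) :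
    Γ (X + Y) = Γ X + Γ Y := rfl

theorem partialTranspose_smul {R : Type*} [SMul R ℂ] (c : R)
    (X : Matrix (Fin n × Fin m) (Fin n × Fin m) ℂ) : Γ (c • X) = c • Γ X := rfl

theorem trace_partialTranspose (X : Matrix (Fin n × Fin m) (Fin n × Fin m) ℂ) :
    (Γ X).trace = X.trace := rfl

theorem Matrix.IsHermitian.partialTranspose {X : Matrix (Fin n × Fin m) (Fin n × Fin m) ℂ}
    (hX : X.IsHermitian) : (Γ X).IsHermitian := by
  ext p q
  exact congrFun (congrFun hX (p.1, q.2)) (q.1, p.2)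

theorem trace_mul_partialTranspose (X Y : Matrix (Fin n × Fin m) (Fin n × Fin m) ℂ) :
    (X * Γ Y).trace = (Γ X * Y).trace := by
  simp only [trace, diag, mul_apply, ← Fintype.sum_prod_type']
  have hσ : Function.Involutive fun pq : (Fin n × Fin m) × (Fin n × Fin m) =>
      ((pq.1.1, pq.2.2), (pq.2.1, pq.1.2)) := fun _ => rfl
  exact Fintype.sum_equiv hσ.toPerm _ _ fun _ => rfl

theorem continuous_partialTranspose :
    Continuous (partialTranspose : Matrix (Fin n × Fin m) (Fin n × Fin m) ℂ → _) :=
  continuous_pi fun _ => continuous_pi fun _ => continuous_apply_apply _ _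

theorem isClosed_setOf_eq_add_partialTranspose :
    IsClosed {X : Matrix (Fin n × Fin m) (Fin n × Fin m) ℂ |
      ∃ A B, A.PosSemidef ∧ B.PosSemidef ∧ X = A + Γ B} := by
  refine isClosed_of_closure_subset fun X hX => ?_
  set R := RCLike.re X.trace + 1
  set Q := {A : Matrix (Fin n × Fin m) (Fin n × Fin m) ℂ | A.PosSemidef ∧ RCLike.re A.trace ≤ R}
  have hQ : IsCompact (Q ×ˢ Q) := (isCompact_setOf_posSemidef_re_trace_le R).prod
    (isCompact_setOf_posSemidef_re_trace_le R)
  have hL : Continuous fun p : Matrix (Fin n × Fin m) (Fin n × Fin m) ℂ × _ => p.1 + Γ p.2 :=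
    continuous_fst.add (continuous_partialTranspose.comp continuous_snd)
  have hV : IsOpen {Y : Matrix (Fin n × Fin m) (Fin n × Fin m) ℂ | RCLike.re Y.trace < R} :=
    isOpen_lt (RCLike.continuous_re.comp continuous_id.matrix_trace) continuous_const
  have hsub : {Y | RCLike.re Y.trace < R} ∩
      {X | ∃ A B, A.PosSemidef ∧ B.PosSemidef ∧ X = A + Γ B} ⊆
      (fun p => p.1 + Γ p.2) '' (Q ×ˢ Q) := by
    rintro _ ⟨hY, A, B, hA, hB, rfl⟩
    have hAB : RCLike.re A.trace + RCLike.re B.trace < R := by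
      rwa [Set.mem_ofPred_eq, trace_add, trace_partialTranspose, map_add] at hY
    exact ⟨(A, B), ⟨⟨hA, by linarith [hB.re_trace_nonneg]⟩,
      ⟨hB, by linarith [hA.re_trace_nonneg]⟩⟩, rfl⟩
  have hXQ := closure_mono hsub (hV.inter_closure ⟨lt_add_one (RCLike.re X.trace), hX⟩)
  rw [(hQ.image hL).isClosed.closure_eq] at hXQ
  obtain ⟨⟨A, B⟩, ⟨hA, hB⟩, rfl⟩ := hXQ
  exact ⟨A, B, hA.1, hB.1, rfl⟩

noncomputable def decomposableCone (n m : ℕ) :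
    ProperCone ℝ (Matrix (Fin n × Fin m) (Fin n × Fin m) ℂ) where
  carrier := {X | ∃ A B, A.PosSemidef ∧ B.PosSemidef ∧ X = A + Γ B}
  add_mem' := by
    rintro _ _ ⟨A, B, hA, hB, rfl⟩ ⟨A', B', hA', hB', rfl⟩
    exact ⟨A + A', B + B', hA.add hA', hB.add hB', by rw [partialTranspose_add]; abel⟩
  zero_mem' := ⟨0, 0, .zero, .zero, by simp⟩
  smul_mem' := by
    rintro c _ ⟨A, B, hA, hB, rfl⟩
    exact ⟨c • A, c • B, hA.smul c.2, hB.smul c.2, by rw [smul_add, partialTranspose_smul]⟩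
  isClosed' := isClosed_setOf_eq_add_partialTranspose

theorem mem_decomposableCone {X : Matrix (Fin n × Fin m) (Fin n × Fin m) ℂ} :
    X ∈ decomposableCone n m ↔ ∃ A B, A.PosSemidef ∧ B.PosSemidef ∧ X = A + Γ B :=
  Iff.rfl

theorem trace_mul_nonneg_of_mem_decomposableCone
    {ρ X : Matrix (Fin n × Fin m) (Fin n × Fin m) ℂ} (hρ : ρ.PosSemidef)
    (hΓρ : (Γ ρ).PosSemidef) (hX : X ∈ decomposableCone n m) :
    0 ≤ (ρ * X).trace := by
  obtain ⟨A, B, hA, hB, rfl⟩ := hX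
  rw [mul_add, trace_add, trace_mul_partialTranspose]
  exact add_nonneg (hρ.trace_mul_nonneg hA) (hΓρ.trace_mul_nonneg hB)

theorem re_trace_mul_nonneg_of_forall_ppt_state {H : Matrix (Fin n × Fin m) (Fin n × Fin m) ℂ}
    (h : ∀ ρ : Matrix (Fin n × Fin m) (Fin n × Fin m) ℂ,
      ρ.PosSemidef → ρ.trace = 1 → (Γ ρ).PosSemidef → 0 ≤ (ρ * H).trace.re)
    {ρ : Matrix (Fin n × Fin m) (Fin n × Fin m) ℂ} (hρ : ρ.PosSemidef) (hΓρ : (Γ ρ).PosSemidef) :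
    0 ≤ (ρ * H).trace.re := by
  obtain rfl | hne := eq_or_ne ρ 0
  · simp
  have hpos : 0 < ρ.trace := hρ.trace_nonneg.lt_of_ne' (hρ.trace_eq_zero_iff.not.mpr hne)
  obtain ⟨t, ht, htr⟩ : ∃ t : ℝ, 0 < t ∧ ρ.trace = t :=
    ⟨_, (Complex.pos_iff.mp hpos).1, Complex.eq_re_of_ofReal_le (r := 0) (by simpa using hpos.le)⟩
  have hnorm := h (t⁻¹ • ρ) (hρ.smul (inv_nonneg.mpr ht.le))
    (by rw [trace_smul, htr, Complex.real_smul, ← Complex.ofReal_mul, inv_mul_cancel₀ ht.ne',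
      Complex.ofReal_one])
    (by rw [partialTranspose_smul]; exact hΓρ.smul (inv_nonneg.mpr ht.le))
  rw [smul_mul_assoc, trace_smul, Complex.smul_re] at hnorm
  exact (mul_nonneg_iff_of_pos_left (inv_pos.mpr ht)).mp hnorm

theorem mem_decomposableCone_of_forall_ppt {H : Matrix (Fin n × Fin m) (Fin n × Fin m) ℂ}
    (hH : H.IsHermitian) (h : ∀ ρ : Matrix (Fin n × Fin m) (Fin n × Fin m) ℂ,
      ρ.PosSemidef → (Γ ρ).PosSemidef → 0 ≤ (ρ * H).trace.re) :
    H ∈ decomposableCone n m := by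
  by_contra hH'
  obtain ⟨f, hf, hfH⟩ := (decomposableCone n m).hyperplane_separation_point hH'
  obtain ⟨Y, hY⟩ := exists_re_trace_mul_eq f.toLinearMap
  have hpos : ∀ X ∈ decomposableCone n m, X.IsHermitian →
      0 ≤ RCLike.re ((Y + Yᴴ) * X).trace := fun X hX hXh => by
    rw [re_trace_add_conjTranspose_mul hXh, ← hY]
    exact mul_nonneg zero_le_two (hf X hX)
  have hYh : (Y + Yᴴ).IsHermitian := IsSelfAdjoint.add_star_self Y
  have hρ : (Y + Yᴴ).PosSemidef := hYh.posSemidef_of_re_trace_mul_nonneg fun A hA =>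
    hpos A ⟨A, 0, hA, .zero, by simp⟩ hA.1
  have hΓρ : (Γ (Y + Yᴴ)).PosSemidef :=
    hYh.partialTranspose.posSemidef_of_re_trace_mul_nonneg fun B hB => by
      rw [← trace_mul_partialTranspose]
      exact hpos (Γ B) ⟨0, B, .zero, hB, (zero_add _).symm⟩ hB.1.partialTranspose
  have := h _ hρ hΓρ
  rw [← RCLike.re_to_complex, re_trace_add_conjTranspose_mul hH, ← hY,
    ContinuousLinearMap.coe_coe] at this
  linarith

end PartialTranspose

theorem stmt_0_general {n m : ℕ}
    (H : Matrix (Fin n × Fin m) (Fin n × Fin m) ℂ) (hH : H.IsHermitian) :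
    (∃ H₁ H₂ : Matrix (Fin n × Fin m) (Fin n × Fin m) ℂ,
      H₁.PosSemidef ∧ H₂.PosSemidef ∧ H = H₁ + partialTranspose H₂) ↔
    (∀ ρ : Matrix (Fin n × Fin m) (Fin n × Fin m) ℂ,
      ρ.PosSemidef → ρ.trace = 1 → (partialTranspose ρ).PosSemidef →
      ((ρ * H).trace).im = 0 ∧ 0 ≤ ((ρ * H).trace).re) := by
  rw [← mem_decomposableCone]
  refine ⟨fun hH' ρ hρ _ hΓρ => ?_, fun h => mem_decomposableCone_of_forall_ppt hH
    fun _ => re_trace_mul_nonneg_of_forall_ppt_state fun ρ hρ htr hΓρ => (h ρ hρ htr hΓρ).2⟩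
  obtain ⟨hre, him⟩ := Complex.nonneg_iff.mp (trace_mul_nonneg_of_mem_decomposableCone hρ hΓρ hH')
  exact ⟨him.symm, hre⟩

theorem stmt_0 {n m : ℕ} (hn : 1 ≤ n) (hm : 1 ≤ m)
    (H : Matrix (Fin n × Fin m) (Fin n × Fin m) ℂ) (hH : H.IsHermitian) :
    (∃ H₁ H₂ : Matrix (Fin n × Fin m) (Fin n × Fin m) ℂ,
      H₁.PosSemidef ∧ H₂.PosSemidef ∧ H = H₁ + partialTranspose H₂) ↔
    (∀ ρ : Matrix (Fin n × Fin m) (Fin n × Fin m) ℂ,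
      ρ.PosSemidef → ρ.trace = 1 → (partialTranspose ρ).PosSemidef →
      ((ρ * H).trace).im = 0 ∧ 0 ≤ ((ρ * H).trace).re) :=
  stmt_0_general H hH
end

section
/- Let n m : ℕ with n, m ≥ 1, and let ρ : Matrix (Fin n × Fin m) (Fin n × Fin m) ℂ be Hermitian with trace 1. Then the following are equivalent: (i) ρ is separable, i.e., there exist N : ℕ, nonnegative reals p : Fin N → ℝ with ∑ p k = 1, and families σ : Fin N → Matrix (Fin n) (Fin n) ℂ and τ : Fin N → Matrix (Fin m) (Fin m) ℂ of positive semidefinite matrices of trace 1, such that ρ = ∑ k, (p k : ℂ) • (σ k ⊗ₖ τ k); (ii) for every Hermitian H : Matrix (Fin n × Fin m) (Fin n × Fin m) ℂ which is block-positive, i.e., for all x : Fin n → ℂ and y : Fin m → ℂ one has 0 ≤ (star (x ⊗ y) ⬝ᵥ (H *ᵥ (x ⊗ y))).re where (x ⊗ y) (p,s) = x p * y s, one has 0 ≤ (Tr(ρ * H)).re. -/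
open Matrix ComplexOrder Kronecker

/-- Tensor (Kronecker) product of two vectors. -/
def vecTensor {n m : ℕ} (x : Fin n → ℂ) (y : Fin m → ℂ) : Fin n × Fin m → ℂ :=
  fun p => x p.1 * y p.2

/-!
Every positive semidefinite matrix is a sum of rank-one matrices `v vᴴ`, and the pairing of
`(v vᴴ) ⊗ₖ (w wᴴ)` with `H` is the value of the quadratic form of `H` at `v ⊗ w`; so separable
states pair nonnegatively with block-positive operators.

Conversely, the separable states are the convex hull of the pure product states, which is compact
by Carathéodory's theorem. A state `ρ` outside it is strictly separated by a functional
`A ↦ Re tr(A H)` with `H` Hermitian, say `Re tr(ρ H) < u < Re tr(P H)` for all pure product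
states `P`; then `H - u • 1` is block-positive and pairs negatively with `ρ`.
-/

open Set Module Metric

theorem convexHull_eq_biUnion_image_stdSimplex {E : Type*} [AddCommGroup E] [Module ℝ E]
    [FiniteDimensional ℝ E] (s : Set E) :
    convexHull ℝ s = ⋃ k ∈ Finset.range (finrank ℝ E + 2),
      (fun p : (Fin k → ℝ) × (Fin k → E) => ∑ i, p.1 i • p.2 i) ''
        (stdSimplex ℝ (Fin k) ×ˢ univ.pi fun _ => s) := by
  apply Subset.antisymm
  · intro x hx
    obtain ⟨α, _, z, w, hzs, hz, hw0, hw1, rfl⟩ := eq_pos_convex_span_of_mem_convexHull hx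
    have hcard : Fintype.card α < finrank ℝ E + 2 :=
      Nat.lt_succ_of_le <| hz.card_le_finrank_succ.trans <|
        Nat.add_le_add_right (Submodule.finrank_le _) 1
    let e := (Fintype.equivFin α).symm
    refine mem_iUnion₂.2 ⟨_, Finset.mem_range.2 hcard, (w ∘ e, z ∘ e), ⟨⟨fun i => (hw0 _).le, ?_⟩,
      fun i _ => hzs (mem_range_self _)⟩, e.sum_comp fun i => w i • z i⟩
    simpa only [Function.comp_apply, e.sum_comp] using hw1
  · simp only [iUnion₂_subset_iff]
    rintro k - _ ⟨⟨w, z⟩, ⟨⟨hw0, hw1⟩, hz⟩, rfl⟩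
    exact (convex_convexHull ℝ s).sum_mem (fun i _ => hw0 i) hw1
      fun i _ => subset_convexHull ℝ s (hz i (mem_univ i))

theorem IsCompact.convexHull {E : Type*} [AddCommGroup E] [Module ℝ E] [TopologicalSpace E]
    [ContinuousAdd E] [ContinuousSMul ℝ E] [FiniteDimensional ℝ E] {s : Set E}
    (hs : IsCompact s) : IsCompact (convexHull ℝ s) := by
  rw [convexHull_eq_biUnion_image_stdSimplex]
  exact (Finset.range _).isCompact_biUnion fun k _ =>
    ((isCompact_stdSimplex ℝ _).prod (isCompact_univ_pi fun _ => hs)).image (by fun_prop)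

theorem sum_kronecker_sum {ι κ α β : Type*} [Fintype α] [Fintype β] (S : α → Matrix ι ι ℂ)
    (T : β → Matrix κ κ ℂ) : (∑ a, S a) ⊗ₖ (∑ b, T b) = ∑ a, ∑ b, S a ⊗ₖ T b := by
  ext ⟨i, k⟩ ⟨j, l⟩
  simp only [kronecker_apply, Matrix.sum_apply, Finset.sum_mul_sum]

section

variable {ι κ : Type*} [Fintype ι] [Fintype κ]

theorem trace_vecMulVec_star_mul (v : ι → ℂ) (H : Matrix ι ι ℂ) :
    (vecMulVec v (star v) * H).trace = star v ⬝ᵥ (H *ᵥ v) := by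
  simp only [trace, diag, mul_apply, vecMulVec_apply, dotProduct, mulVec, Finset.mul_sum]
  rw [Finset.sum_comm]
  exact Finset.sum_congr rfl fun _ _ => Finset.sum_congr rfl fun _ _ => by ring

theorem trace_vecMulVec_ofLp_star (x : EuclideanSpace ℂ ι) :
    (vecMulVec x.ofLp (star x.ofLp)).trace = (‖x‖ ^ 2 : ℝ) := by
  rw [trace_vecMulVec, ← EuclideanSpace.inner_eq_star_dotProduct, inner_self_eq_norm_sq_to_K]
  push_cast; rfl

theorem trace_vecMulVec_ofLp_star_of_mem_sphere {x : EuclideanSpace ℂ ι} (hx : x ∈ sphere 0 1) :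
    (vecMulVec x.ofLp (star x.ofLp)).trace = 1 := by
  rw [trace_vecMulVec_ofLp_star, mem_sphere_zero_iff_norm.1 hx]
  norm_num

theorem exists_trace_mul_eq (f : Matrix ι ι ℂ →ₗ[ℂ] ℂ) :
    ∃ G : Matrix ι ι ℂ, ∀ A, f A = (A * G).trace := by
  classical
  refine ⟨of fun j i => f (single i j 1), fun A => ?_⟩
  have hsingle : ∀ i j, single i j (A i j) = A i j • single i j 1 := fun i j => by
    rw [smul_single, smul_eq_mul, mul_one]
  conv_lhs => rw [matrix_eq_sum_single A]
  simp only [map_sum, hsingle, map_smul, smul_eq_mul, trace, diag, mul_apply, of_apply]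

theorem exists_isHermitian_re_trace_mul_eq (f : Matrix ι ι ℂ →ₗ[ℂ] ℂ) :
    ∃ H : Matrix ι ι ℂ, H.IsHermitian ∧
      ∀ A : Matrix ι ι ℂ, A.IsHermitian → (f A).re = ((A * H).trace).re := by
  obtain ⟨G, hG⟩ := exists_trace_mul_eq f
  refine ⟨(realPart G : Matrix ι ι ℂ), (realPart G).2, fun A hA => ?_⟩
  have hadj : (A * star G).trace = star (A * G).trace := by
    rw [← trace_conjTranspose, conjTranspose_mul, hA.eq, trace_mul_comm]; rfl
  rw [realPart_apply_coe, mul_smul_comm, trace_smul, Matrix.mul_add, trace_add, hadj, hG]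
  simp only [Complex.smul_re, Complex.add_re, Complex.star_def, Complex.conj_re, smul_eq_mul]
  ring

theorem exists_eq_smul_ofLp_of_ne_zero {x : ι → ℂ} (hx : x ≠ 0) :
    ∃ X ∈ sphere (0 : EuclideanSpace ℂ ι) 1, ∃ c : ℝ, x = c • X.ofLp := by
  have hX : WithLp.toLp 2 x ≠ 0 := by simpa using hx
  refine ⟨‖WithLp.toLp 2 x‖⁻¹ • WithLp.toLp 2 x, ?_, ‖WithLp.toLp 2 x‖, ?_⟩
  · rw [mem_sphere_zero_iff_norm, norm_smul, norm_inv, norm_norm,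
      inv_mul_cancel₀ (norm_ne_zero_iff.2 hX)]
  · rw [WithLp.ofLp_smul, smul_inv_smul₀ (norm_ne_zero_iff.2 hX)]

theorem re_star_smul_dotProduct_mulVec_smul (c : ℝ) (v : ι → ℂ) (H : Matrix ι ι ℂ) :
    (star (c • v) ⬝ᵥ (H *ᵥ (c • v))).re = c ^ 2 * (star v ⬝ᵥ (H *ᵥ v)).re := by
  rw [star_smul, star_trivial, mulVec_smul, smul_dotProduct, dotProduct_smul, smul_smul,
    Complex.real_smul, Complex.re_ofReal_mul, sq]

def IsSeparableState (ρ : Matrix (ι × κ) (ι × κ) ℂ) : Prop :=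
  ∃ (N : ℕ) (p : Fin N → ℝ) (σ : Fin N → Matrix ι ι ℂ) (τ : Fin N → Matrix κ κ ℂ),
    (∀ k, 0 ≤ p k) ∧ (∑ k, p k) = 1 ∧
    (∀ k, (σ k).PosSemidef) ∧ (∀ k, (σ k).trace = 1) ∧
    (∀ k, (τ k).PosSemidef) ∧ (∀ k, (τ k).trace = 1) ∧
    ρ = ∑ k, (p k : ℂ) • (σ k ⊗ₖ τ k)

def pureProductStates (ι κ : Type*) [Fintype ι] [Fintype κ] : Set (Matrix (ι × κ) (ι × κ) ℂ) :=
  (fun q : EuclideanSpace ℂ ι × EuclideanSpace ℂ κ =>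
      vecMulVec q.1.ofLp (star q.1.ofLp) ⊗ₖ vecMulVec q.2.ofLp (star q.2.ofLp)) ''
    (sphere 0 1 ×ˢ sphere 0 1)

theorem isCompact_pureProductStates : IsCompact (pureProductStates ι κ) :=
  ((isCompact_sphere _ _).prod (isCompact_sphere _ _)).image <| by
    refine continuous_matrix fun _ _ => ?_
    simp only [kroneckerMap_apply, vecMulVec_apply, Pi.star_apply]
    fun_prop

theorem trace_eq_one_of_mem_pureProductStates {P : Matrix (ι × κ) (ι × κ) ℂ}
    (hP : P ∈ pureProductStates ι κ) : P.trace = 1 := by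
  obtain ⟨⟨x, y⟩, ⟨hx, hy⟩, rfl⟩ := hP
  rw [trace_kronecker, trace_vecMulVec_ofLp_star_of_mem_sphere hx,
    trace_vecMulVec_ofLp_star_of_mem_sphere hy, one_mul]

theorem isSeparableState_of_mem_convexHull {ρ : Matrix (ι × κ) (ι × κ) ℂ}
    (hρ : ρ ∈ convexHull ℝ (pureProductStates ι κ)) : IsSeparableState ρ := by
  rw [convexHull_eq_biUnion_image_stdSimplex] at hρ
  obtain ⟨k, -, ⟨w, P⟩, ⟨⟨hw0, hw1⟩, hP⟩, rfl⟩ := mem_iUnion₂.1 hρ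
  choose q hq hqP using fun i => hP i (mem_univ i)
  refine ⟨k, w, fun i => vecMulVec (q i).1.ofLp (star (q i).1.ofLp),
    fun i => vecMulVec (q i).2.ofLp (star (q i).2.ofLp), hw0, hw1,
    fun i => posSemidef_vecMulVec_self_star _,
    fun i => trace_vecMulVec_ofLp_star_of_mem_sphere (hq i).1,
    fun i => posSemidef_vecMulVec_self_star _,
    fun i => trace_vecMulVec_ofLp_star_of_mem_sphere (hq i).2, ?_⟩
  simp only [Complex.coe_smul, hqP]

end

section

variable {n m : ℕ}

def IsBlockPositive (H : Matrix (Fin n × Fin m) (Fin n × Fin m) ℂ) : Prop :=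
  ∀ (x : Fin n → ℂ) (y : Fin m → ℂ), 0 ≤ (star (vecTensor x y) ⬝ᵥ (H *ᵥ vecTensor x y)).re

theorem vecMulVec_vecTensor (x : Fin n → ℂ) (y : Fin m → ℂ) :
    vecMulVec (vecTensor x y) (star (vecTensor x y))
      = vecMulVec x (star x) ⊗ₖ vecMulVec y (star y) := by
  ext ⟨i, k⟩ ⟨j, l⟩
  simp only [vecMulVec_apply, vecTensor, Pi.star_apply, star_mul', kronecker_apply]
  ring

theorem vecTensor_smul_smul (a b : ℝ) (x : Fin n → ℂ) (y : Fin m → ℂ) :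
    vecTensor (a • x) (b • y) = (a * b) • vecTensor x y := by
  ext
  simp only [vecTensor, Pi.smul_apply, Complex.real_smul, Complex.ofReal_mul]
  ring

theorem isBlockPositive_of_forall_mem_sphere {H : Matrix (Fin n × Fin m) (Fin n × Fin m) ℂ}
    (h : ∀ x ∈ sphere (0 : EuclideanSpace ℂ (Fin n)) 1,
      ∀ y ∈ sphere (0 : EuclideanSpace ℂ (Fin m)) 1,
      0 ≤ (star (vecTensor x.ofLp y.ofLp) ⬝ᵥ (H *ᵥ vecTensor x.ofLp y.ofLp)).re) :
    IsBlockPositive H := by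
  intro x y
  rcases eq_or_ne x 0 with rfl | hx
  · simp [show vecTensor 0 y = 0 from funext fun _ => zero_mul _]
  rcases eq_or_ne y 0 with rfl | hy
  · simp [show vecTensor x 0 = 0 from funext fun _ => mul_zero _]
  obtain ⟨X, hX, a, rfl⟩ := exists_eq_smul_ofLp_of_ne_zero hx
  obtain ⟨Y, hY, b, rfl⟩ := exists_eq_smul_ofLp_of_ne_zero hy
  rw [vecTensor_smul_smul, re_star_smul_dotProduct_mulVec_smul]
  exact mul_nonneg (sq_nonneg _) (h X hX Y hY)

theorem IsBlockPositive.re_trace_kronecker_mul_nonneg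
    {H : Matrix (Fin n × Fin m) (Fin n × Fin m) ℂ} (hH : IsBlockPositive H)
    {σ : Matrix (Fin n) (Fin n) ℂ} {τ : Matrix (Fin m) (Fin m) ℂ}
    (hσ : σ.PosSemidef) (hτ : τ.PosSemidef) : 0 ≤ ((σ ⊗ₖ τ) * H).trace.re := by
  obtain ⟨_, v, rfl⟩ := posSemidef_iff_eq_sum_vecMulVec.1 hσ
  obtain ⟨_, w, rfl⟩ := posSemidef_iff_eq_sum_vecMulVec.1 hτ
  simp only [sum_kronecker_sum, Finset.sum_mul, trace_sum, Complex.re_sum,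
    ← vecMulVec_vecTensor, trace_vecMulVec_star_mul]
  exact Finset.sum_nonneg fun a _ => Finset.sum_nonneg fun b _ => hH _ _

theorem IsSeparableState.re_trace_mul_nonneg {ρ : Matrix (Fin n × Fin m) (Fin n × Fin m) ℂ}
    (hρ : IsSeparableState ρ) {H : Matrix (Fin n × Fin m) (Fin n × Fin m) ℂ}
    (hH : IsBlockPositive H) : 0 ≤ (ρ * H).trace.re := by
  obtain ⟨N, p, σ, τ, hp, -, hσ, -, hτ, -, rfl⟩ := hρ
  simp only [Finset.sum_mul, trace_sum, Complex.re_sum, smul_mul_assoc, trace_smul, smul_eq_mul,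
    Complex.re_ofReal_mul]
  exact Finset.sum_nonneg fun k _ =>
    mul_nonneg (hp k) (hH.re_trace_kronecker_mul_nonneg (hσ k) (hτ k))

theorem exists_isBlockPositive_re_trace_mul_neg
    {ρ : Matrix (Fin n × Fin m) (Fin n × Fin m) ℂ} (hρ : ρ.IsHermitian) (htr : ρ.trace = 1)
    (hsep : ρ ∉ convexHull ℝ (pureProductStates (Fin n) (Fin m))) :
    ∃ H : Matrix (Fin n × Fin m) (Fin n × Fin m) ℂ,
      H.IsHermitian ∧ IsBlockPositive H ∧ (ρ * H).trace.re < 0 := by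
  have : LocallyConvexSpace ℝ (Matrix (Fin n × Fin m) (Fin n × Fin m) ℂ) :=
    inferInstanceAs (LocallyConvexSpace ℝ (Fin n × Fin m → Fin n × Fin m → ℂ))
  obtain ⟨f, u, hfρ, hfK⟩ := RCLike.geometric_hahn_banach_point_closed (𝕜 := ℂ)
    (convex_convexHull ℝ _) isCompact_pureProductStates.convexHull.isClosed hsep
  obtain ⟨H, hH, hfH⟩ := exists_isHermitian_re_trace_mul_eq f.toLinearMap
  simp only [RCLike.re_to_complex] at hfρ hfK
  simp only [ContinuousLinearMap.coe_coe] at hfH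
  have hshift (A : Matrix (Fin n × Fin m) (Fin n × Fin m) ℂ) :
      (A * (H - u • 1)).trace.re = (A * H).trace.re - u * A.trace.re := by
    simp [Matrix.mul_sub, trace_sub]
  refine ⟨H - u • 1, hH.sub (isHermitian_one.smul (IsSelfAdjoint.all u)),
    isBlockPositive_of_forall_mem_sphere fun x hx y hy => ?_, ?_⟩
  · have hP : vecMulVec (vecTensor x.ofLp y.ofLp) (star (vecTensor x.ofLp y.ofLp))
        ∈ pureProductStates (Fin n) (Fin m) := ⟨(x, y), ⟨hx, hy⟩, (vecMulVec_vecTensor _ _).symm⟩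
    rw [← trace_vecMulVec_star_mul, hshift, trace_eq_one_of_mem_pureProductStates hP,
      Complex.one_re, mul_one, ← hfH _ (posSemidef_vecMulVec_self_star _).isHermitian]
    linarith [hfK _ (subset_convexHull ℝ _ hP)]
  · rw [hshift, htr, Complex.one_re, mul_one, ← hfH ρ hρ]
    linarith

end

theorem stmt_2_general {n m : ℕ}
    (ρ : Matrix (Fin n × Fin m) (Fin n × Fin m) ℂ) (hρ : ρ.IsHermitian)
    (htr : ρ.trace = 1) :
    (∃ (N : ℕ) (p : Fin N → ℝ) (σ : Fin N → Matrix (Fin n) (Fin n) ℂ)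
        (τ : Fin N → Matrix (Fin m) (Fin m) ℂ),
      (∀ k, 0 ≤ p k) ∧ (∑ k, p k) = 1 ∧
      (∀ k, (σ k).PosSemidef) ∧ (∀ k, (σ k).trace = 1) ∧
      (∀ k, (τ k).PosSemidef) ∧ (∀ k, (τ k).trace = 1) ∧
      ρ = ∑ k, (p k : ℂ) • (σ k ⊗ₖ τ k)) ↔
    (∀ H : Matrix (Fin n × Fin m) (Fin n × Fin m) ℂ, H.IsHermitian →
      (∀ (x : Fin n → ℂ) (y : Fin m → ℂ),
        0 ≤ (star (vecTensor x y) ⬝ᵥ (H *ᵥ vecTensor x y)).re) →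
      0 ≤ ((ρ * H).trace).re) := by
  refine ⟨fun hsep H _ hH => IsSeparableState.re_trace_mul_nonneg hsep hH, fun hdual => ?_⟩
  by_contra hsep
  obtain ⟨H, hH, hbp, hneg⟩ :=
    exists_isBlockPositive_re_trace_mul_neg hρ htr (mt isSeparableState_of_mem_convexHull hsep)
  exact (hdual H hH hbp).not_gt hneg

theorem stmt_2 {n m : ℕ} (hn : 1 ≤ n) (hm : 1 ≤ m)
    (ρ : Matrix (Fin n × Fin m) (Fin n × Fin m) ℂ) (hρ : ρ.IsHermitian)
    (htr : ρ.trace = 1) :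
    (∃ (N : ℕ) (p : Fin N → ℝ) (σ : Fin N → Matrix (Fin n) (Fin n) ℂ)
        (τ : Fin N → Matrix (Fin m) (Fin m) ℂ),
      (∀ k, 0 ≤ p k) ∧ (∑ k, p k) = 1 ∧
      (∀ k, (σ k).PosSemidef) ∧ (∀ k, (σ k).trace = 1) ∧
      (∀ k, (τ k).PosSemidef) ∧ (∀ k, (τ k).trace = 1) ∧
      ρ = ∑ k, (p k : ℂ) • (σ k ⊗ₖ τ k)) ↔
    (∀ H : Matrix (Fin n × Fin m) (Fin n × Fin m) ℂ, H.IsHermitian →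
      (∀ (x : Fin n → ℂ) (y : Fin m → ℂ),
        0 ≤ (star (vecTensor x y) ⬝ᵥ (H *ᵥ vecTensor x y)).re) →
      0 ≤ ((ρ * H).trace).re) :=
  stmt_2_general ρ hρ htr
end

section
/- Let k n m : ℕ with k, n, m ≥ 1. Let A : Matrix (Fin k × Fin n) (Fin k × Fin n) ℂ be positive semidefinite and assume that its partial transpose with respect to the first factor, Γ₁(A) defined by Γ₁(A) (i,p) (j,r) = A (j,p) (i,r), is also positive semidefinite. Let x : Fin k → (Fin m → ℂ). Then for every positive semidefinite C : Matrix (Fin n × Fin m) (Fin n × Fin m) ℂ, the complex number ∑ i, ∑ j, ∑ p, ∑ r, ∑ t, ∑ v, A (i,p) (j,r) * star (x i t) * C (r,t) (p,v) * (x j v) is real and nonnegative. -/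
open Matrix ComplexOrder

/-- Partial transpose with respect to the first tensor factor. -/
def partialTransposeFst {k n : ℕ} (A : Matrix (Fin k × Fin n) (Fin k × Fin n) ℂ) :
    Matrix (Fin k × Fin n) (Fin k × Fin n) ℂ :=
  fun p q => A (q.1, p.2) (p.1, q.2)

/-!
With `X = conjKronOne (Fin n) x`, the sum equals `tr (A * Γ₁ (X * C * Xᴴ))`. Partial
transposition is self-adjoint for the trace pairing, so this is `tr (Γ₁ A * (X * C * Xᴴ))`,
the trace of a product of two positive semidefinite matrices, hence nonnegative.
-/

theorem Matrix.PosSemidef.trace_mul_nonneg_s9 {𝕜 ι : Type*} [RCLike 𝕜] [Fintype ι]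
    {A B : Matrix ι ι 𝕜} (hA : A.PosSemidef) (hB : B.PosSemidef) : 0 ≤ (A * B).trace := by
  classical
  open scoped MatrixOrder in
  obtain ⟨C, rfl⟩ := CStarAlgebra.nonneg_iff_eq_star_mul_self.mp hB.nonneg
  rw [star_eq_conjTranspose, ← mul_assoc, trace_mul_comm, ← mul_assoc]
  exact (hA.mul_mul_conjTranspose_same C).trace_nonneg

/-- `x̄ ⊗ 1`, with the two factors of the column index swapped. -/
def conjKronOne {ι β R : Type*} (α : Type*) [DecidableEq α] [Zero R] [Star R]
    (x : ι → β → R) : Matrix (ι × α) (α × β) R :=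
  fun a b => if a.2 = b.1 then star (x a.1 b.2) else 0

theorem conjKronOne_mul_mul_conjTranspose_apply {ι α β R : Type*} [Fintype α] [Fintype β]
    [DecidableEq α] [CommSemiring R] [StarRing R] (x : ι → β → R)
    (C : Matrix (α × β) (α × β) R) (i j : ι) (r p : α) :
    (conjKronOne α x * C * (conjKronOne α x)ᴴ) (i, r) (j, p) =
      ∑ t, ∑ v, star (x i t) * C (r, t) (p, v) * x j v := by
  rw [Finset.sum_comm]
  simp [conjKronOne, mul_apply, Fintype.sum_prod_type, Finset.sum_mul, apply_ite star, mul_ite]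

theorem trace_mul_partialTransposeFst {k n : ℕ} (A B : Matrix (Fin k × Fin n) (Fin k × Fin n) ℂ) :
    (A * partialTransposeFst B).trace = (partialTransposeFst A * B).trace := by
  simp only [trace, diag, mul_apply, ← Fintype.sum_prod_type']
  exact Fintype.sum_equiv (Function.Involutive.toPerm (fun z => ((z.2.1, z.1.2), (z.1.1, z.2.2)))
    fun _ => rfl) _ _ fun _ => rfl

theorem sum_eq_trace_mul_partialTransposeFst {k n m : ℕ}
    (A : Matrix (Fin k × Fin n) (Fin k × Fin n) ℂ) (x : Fin k → Fin m → ℂ)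
    (C : Matrix (Fin n × Fin m) (Fin n × Fin m) ℂ) :
    ∑ i, ∑ j, ∑ p, ∑ r, ∑ t, ∑ v, A (i, p) (j, r) * star (x i t) * C (r, t) (p, v) * x j v =
      (A * partialTransposeFst (conjKronOne (Fin n) x * C * (conjKronOne (Fin n) x)ᴴ)).trace := by
  simp only [trace, diag, mul_apply (M := A), partialTransposeFst,
    conjKronOne_mul_mul_conjTranspose_apply, Fintype.sum_prod_type, Finset.mul_sum, mul_assoc]
  exact Finset.sum_congr rfl fun _ _ => Finset.sum_comm

theorem stmt_9_general {k n m : ℕ}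
    (A : Matrix (Fin k × Fin n) (Fin k × Fin n) ℂ)
    (hAτ : (partialTransposeFst A).PosSemidef)
    (x : Fin k → (Fin m → ℂ))
    (C : Matrix (Fin n × Fin m) (Fin n × Fin m) ℂ) (hC : C.PosSemidef) :
    (∑ i, ∑ j, ∑ p, ∑ r, ∑ t, ∑ v,
        A (i, p) (j, r) * star (x i t) * C (r, t) (p, v) * (x j v)).im = 0 ∧
    0 ≤ (∑ i, ∑ j, ∑ p, ∑ r, ∑ t, ∑ v,
        A (i, p) (j, r) * star (x i t) * C (r, t) (p, v) * (x j v)).re := by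
  have h := hAτ.trace_mul_nonneg_s9 (hC.mul_mul_conjTranspose_same (conjKronOne (Fin n) x))
  rw [← trace_mul_partialTransposeFst, ← sum_eq_trace_mul_partialTransposeFst,
    Complex.nonneg_iff] at h
  exact ⟨h.2.symm, h.1⟩

theorem stmt_9 {k n m : ℕ} (hk : 1 ≤ k) (hn : 1 ≤ n) (hm : 1 ≤ m)
    (A : Matrix (Fin k × Fin n) (Fin k × Fin n) ℂ) (hA : A.PosSemidef)
    (hAτ : (partialTransposeFst A).PosSemidef)
    (x : Fin k → (Fin m → ℂ))
    (C : Matrix (Fin n × Fin m) (Fin n × Fin m) ℂ) (hC : C.PosSemidef) :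
    (∑ i, ∑ j, ∑ p, ∑ r, ∑ t, ∑ v,
        A (i, p) (j, r) * star (x i t) * C (r, t) (p, v) * (x j v)).im = 0 ∧
    0 ≤ (∑ i, ∑ j, ∑ p, ∑ r, ∑ t, ∑ v,
        A (i, p) (j, r) * star (x i t) * C (r, t) (p, v) * (x j v)).re :=
  stmt_9_general A hAτ x C hC
end
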